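/- In any alternative algebra A over a field of characteristic 0, the inner derivation operators satisfy the cocycle identity D_{ab,c} + D_{bc,a} + D_{ca,b} = 0 for all a, b, c in A, where D_{x,y} = [L_x, L_y] + [R_x, R_y] + [L_x, R_y]. -/

import Mathlib

/-!
Writing `(x, y, z)` for the associator, the alternative laws make the associator alternating, and
then `D_{a,b} x = [[a, b], x] - 3 (a, b, x)`. The cyclic sum of `[ab, c]` is `3 (a, b, c)`, while
the Teichmüller identity makes the cyclic sum of `(ab, c, x)` equal to `[(a, b, c), x]`, so the
two contributions to the cyclic sum of `D_{ab,c} x` cancel.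
-/

/-- The inner-derivation operator `D_{a,b} = [L_a, L_b] + [R_a, R_b] + [L_a, R_b]`. -/
def innerDeriv (k : Type*) {A : Type*} [CommRing k] [NonUnitalNonAssocRing A]
    [Module k A] [SMulCommClass k A A] [IsScalarTower k A A] (a b : A) :
    Module.End k A :=
  ⁅LinearMap.mulLeft k a, LinearMap.mulLeft k b⁆ +
    ⁅LinearMap.mulRight k a, LinearMap.mulRight k b⁆ +
    ⁅LinearMap.mulLeft k a, LinearMap.mulRight k b⁆

section Alternative

variable {A : Type*} [NonUnitalNonAssocRing A]

theorem associator_swap_left (h : ∀ x y : A, x * x * y = x * (x * y)) (x y z : A) :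
    associator y x z = -associator x y z := by
  have hxy := h (x + y) z
  simp only [add_mul, mul_add, h] at hxy
  rw [associator_apply, associator_apply]
  linear_combination (norm := abel) hxy

theorem associator_swap_right (h : ∀ x y : A, x * y * y = x * (y * y)) (x y z : A) :
    associator x z y = -associator x y z := by
  have hyz := h x (y + z)
  simp only [add_mul, mul_add, h] at hyz
  rw [associator_apply, associator_apply]
  linear_combination (norm := abel) hyz

theorem associator_rotate (h₁ : ∀ x y : A, x * x * y = x * (x * y))
    (h₂ : ∀ x y : A, x * y * y = x * (y * y)) (x y z : A) :
    associator y z x = associator x y z := by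
  rw [associator_swap_right h₂, associator_swap_left h₁, neg_neg]

theorem innerDeriv_apply (k : Type*) [CommRing k] [Module k A] [SMulCommClass k A A]
    [IsScalarTower k A A] (h₁ : ∀ x y : A, x * x * y = x * (x * y))
    (h₂ : ∀ x y : A, x * y * y = x * (y * y)) (a b x : A) :
    innerDeriv k a b x = (a * b - b * a) * x - x * (a * b - b * a) - 3 • associator a b x := by
  simp only [innerDeriv, Ring.lie_def, LinearMap.add_apply, LinearMap.sub_apply,
    Module.End.mul_apply, LinearMap.mulLeft_apply, LinearMap.mulRight_apply]
  linear_combination (norm := skip) associator_swap_left h₁ a b x +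
    associator_swap_right h₂ x a b - associator_swap_right h₂ a b x +
    associator_rotate h₁ h₂ x a b + associator_rotate h₁ h₂ x a b
  simp only [associator_apply, mul_sub, sub_mul]
  abel

theorem commutator_mul_cyclic_sum (h₁ : ∀ x y : A, x * x * y = x * (x * y))
    (h₂ : ∀ x y : A, x * y * y = x * (y * y)) (a b c : A) :
    a * b * c - c * (a * b) + (b * c * a - a * (b * c)) + (c * a * b - b * (c * a)) =
      3 • associator a b c := by
  linear_combination (norm := skip) associator_rotate h₁ h₂ a b c +
    associator_rotate h₁ h₂ a b c + associator_rotate h₁ h₂ b c a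
  simp only [associator_apply]
  abel

/- The sum `T(a,b,c,x) + T(a,b,x,c) + T(b,c,x,a) + T(b,x,c,a) - T(x,a,b,c)` of Teichmüller
identities (`associator_cocycle`), with associators matched up by alternation. The Teichmüller
identities hold in every nonassociative ring, so after unfolding `abel` supplies them and only the
alternation steps are listed. -/
theorem associator_mul_cyclic_sum (h₁ : ∀ x y : A, x * x * y = x * (x * y))
    (h₂ : ∀ x y : A, x * y * y = x * (y * y)) (a b c x : A) :
    associator (a * b) c x + associator (b * c) a x + associator (c * a) b x =
      associator a b c * x - x * associator a b c := by
  have swap_left := associator_swap_left h₁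
  have swap_right := associator_swap_right h₂
  have rotate := associator_rotate h₁ h₂
  linear_combination (norm := skip)
    -swap_right (a * b) c x + rotate x (a * b) c
    + swap_left a (b * c) x + swap_left a (b * c) x - swap_right (b * c) a x - rotate x a (b * c)
    + rotate a b (c * x) - rotate a (b * x) c + rotate a b (x * c) - rotate (x * a) b c
    - rotate (c * a) b x
    + a * swap_right b c x + b * swap_left x c a + swap_right b c x * a + rotate x a b * c
  simp only [associator_apply, mul_sub, sub_mul, mul_neg, neg_mul]
  abel

end Alternative

theorem innerDeriv_cocycle_general {k A : Type*} [Field k]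
    [NonUnitalNonAssocRing A] [Module k A] [SMulCommClass k A A] [IsScalarTower k A A]
    (halt₁ : ∀ x y : A, (x * x) * y = x * (x * y))
    (halt₂ : ∀ x y : A, (x * y) * y = x * (y * y))
    (a b c : A) :
    innerDeriv k (a * b) c + innerDeriv k (b * c) a + innerDeriv k (c * a) b = 0 := by
  ext x
  set s := a * b * c - c * (a * b) + (b * c * a - a * (b * c)) + (c * a * b - b * (c * a))
  calc (innerDeriv k (a * b) c + innerDeriv k (b * c) a + innerDeriv k (c * a) b) x
      = s * x - x * s -
          3 • (associator (a * b) c x + associator (b * c) a x + associator (c * a) b x) := by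
        simp only [LinearMap.add_apply, innerDeriv_apply k halt₁ halt₂, s, add_mul, mul_add]
        abel
    _ = 0 := by
        have hs : s = 3 • associator a b c := commutator_mul_cyclic_sum halt₁ halt₂ a b c
        rw [hs, associator_mul_cyclic_sum halt₁ halt₂, smul_mul_assoc, mul_smul_comm, smul_sub,
          sub_self]

/-- In any alternative algebra `A` over a field of characteristic `0`, the inner derivation
operators satisfy the cocycle identity `D_{ab,c} + D_{bc,a} + D_{ca,b} = 0`. -/
theorem innerDeriv_cocycle {k A : Type*} [Field k] [CharZero k]
    [NonUnitalNonAssocRing A] [Module k A] [SMulCommClass k A A] [IsScalarTower k A A]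
    (halt₁ : ∀ x y : A, (x * x) * y = x * (x * y))
    (halt₂ : ∀ x y : A, (x * y) * y = x * (y * y))
    (a b c : A) :
    innerDeriv k (a * b) c + innerDeriv k (b * c) a + innerDeriv k (c * a) b = 0 :=
  innerDeriv_cocycle_general halt₁ halt₂ a b c
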